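/- If the ridge parameter satisfies ρ ≥ ‖x_{n+1}‖₂ · max_{1≤i≤n} ‖x_i‖₂ (with ρ > 0), then the elastic net conformal prediction set at x_{n+1} is an interval. -/

import Mathlib

open scoped BigOperators Matrix

noncomputable section

/-- Euclidean inner product on `Fin p → ℝ`. -/
def dotp {p : ℕ} (a b : Fin p → ℝ) : ℝ := ∑ j, a j * b j

/-- The elastic net objective
`G(β) = (1/2)∑ᵢ (yᵢ − xᵢ'β)² + λ‖β‖₁ + (ρ/2)‖β‖₂²`. -/
def enObj {n p : ℕ} (x : Fin n → Fin p → ℝ) (y : Fin n → ℝ) (lam ρ : ℝ)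
    (β : Fin p → ℝ) : ℝ :=
  (1 / 2) * ∑ i, (y i - dotp (x i) β) ^ 2 + lam * ∑ j, |β j| + (ρ / 2) * ∑ j, (β j) ^ 2

/-- The augmented elastic net objective with `(x_{n+1}, ynew)` added as the `(n+1)`-th sample. -/
def enAug {n p : ℕ} (x : Fin n → Fin p → ℝ) (y : Fin n → ℝ) (xnew : Fin p → ℝ)
    (lam ρ : ℝ) (ynew : ℝ) (β : Fin p → ℝ) : ℝ :=
  enObj x y lam ρ β + (1 / 2) * (ynew - dotp xnew β) ^ 2

/-- The conformal p-value `p̂_y = 1 − (n+1)⁻¹·#{1 ≤ i ≤ n+1 : |r_i(y)| ≤ |r_{n+1}(y)|}`, where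
`r_i(y) = y_i − x_i'β̃(y)` for `i ≤ n` and `r_{n+1}(y) = y − x_{n+1}'β̃(y)`; the `+1` in the
numerator accounts for the index `i = n+1`, which always satisfies `|r_{n+1}| ≤ |r_{n+1}|`. -/
def pvalConf {n p : ℕ} (x : Fin n → Fin p → ℝ) (y : Fin n → ℝ) (xnew : Fin p → ℝ)
    (βt : ℝ → Fin p → ℝ) (t : ℝ) : ℝ :=
  1 - (((Finset.univ.filter fun i : Fin n =>
        |y i - dotp (x i) (βt t)| ≤ |t - dotp xnew (βt t)|).card + 1 : ℝ)) / (n + 1)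

open Filter Topology Finset

/-! Write `β̃(t)` for the minimiser of the augmented objective with candidate response `t` and
`R(t) = t − x_{n+1}'β̃(t)` for the residual of the new point. The augmented objective is the sum of
the convex `λ‖β‖₁` and a quadratic whose quadratic part dominates `(ρ‖·‖² + (x_{n+1}'·)²)/2`, so it
grows at least that fast away from its minimiser. Adding this growth inequality at `β̃(s)` and `β̃(t)`
gives `ρ‖d‖² + (x_{n+1}'d)² ≤ (t − s)·x_{n+1}'d` for `d = β̃(t) − β̃(s)`, and with Cauchy–Schwarz
and `‖x_{n+1}‖‖x_i‖ ≤ ρ` this yields `|x_i'd| ≤ R(t) − R(s)` whenever `s ≤ t`: no fitted residual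
moves faster than `R`. So an index counted at `t` (`|r_i(t)| ≤ |R(t)|`) is still counted at every
`t₂ ≥ t` if `R(t) ≥ 0`, and at every `t₁ ≤ t` if `R(t) < 0`. The count is thus quasi-convex in `t`,
the p-value quasi-concave, and its superlevel sets are intervals. -/

theorem add_le_of_isMin_of_le_convexCombination {E : Type*} [AddCommGroup E] [Module ℝ E]
    {g : E → ℝ} {m β : E} {c : ℝ} (hm : ∀ γ, g m ≤ g γ)
    (hg : ∀ θ ∈ Set.Ioo (0 : ℝ) 1,
      g ((1 - θ) • m + θ • β) ≤ (1 - θ) * g m + θ * g β - θ * (1 - θ) * c) :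
    g m + c ≤ g β := by
  have hθ : ∀ θ ∈ Set.Ioo (0 : ℝ) 1, g m + (1 - θ) * c ≤ g β := by
    intro θ hθ
    have h : θ * (g m + (1 - θ) * c - g β) ≤ θ * 0 := by linarith [(hm _).trans (hg θ hθ)]
    linarith [le_of_mul_le_mul_left h hθ.1]
  have hlim : Tendsto (fun θ : ℝ => g m + (1 - θ) * c) (𝓝[>] 0) (𝓝 (g m + c)) := by
    have : Continuous fun θ : ℝ => g m + (1 - θ) * c := by fun_prop
    simpa using (this.tendsto 0).mono_left nhdsWithin_le_nhds
  exact le_of_tendsto hlim (eventually_of_mem (Ioo_mem_nhdsGT one_pos) hθ)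

theorem sq_convexCombination (θ u v : ℝ) :
    ((1 - θ) * u + θ * v) ^ 2 = (1 - θ) * u ^ 2 + θ * v ^ 2 - θ * (1 - θ) * (v - u) ^ 2 := by
  ring

theorem sum_sq_convexCombination {ι : Type*} (s : Finset ι) (θ : ℝ) (u v : ι → ℝ) :
    ∑ i ∈ s, ((1 - θ) * u i + θ * v i) ^ 2 = (1 - θ) * ∑ i ∈ s, u i ^ 2 + θ * ∑ i ∈ s, v i ^ 2
      - θ * (1 - θ) * ∑ i ∈ s, (v i - u i) ^ 2 := by
  simp only [sq_convexCombination, sum_sub_distrib, sum_add_distrib, mul_sum]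

theorem abs_convexCombination_le {θ : ℝ} (h₀ : 0 ≤ θ) (h₁ : θ ≤ 1) (u v : ℝ) :
    |(1 - θ) * u + θ * v| ≤ (1 - θ) * |u| + θ * |v| :=
  calc |(1 - θ) * u + θ * v| ≤ |(1 - θ) * u| + |θ * v| := abs_add_le _ _
    _ = (1 - θ) * |u| + θ * |v| := by
      rw [abs_mul, abs_mul, abs_of_nonneg (sub_nonneg.2 h₁), abs_of_nonneg h₀]

theorem sub_dotProduct_convexCombination {ι : Type*} [Fintype ι] (a : ι → ℝ) (c θ : ℝ)
    (u v : ι → ℝ) :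
    c - a ⬝ᵥ ((1 - θ) • u + θ • v) = (1 - θ) * (c - a ⬝ᵥ u) + θ * (c - a ⬝ᵥ v) := by
  simp only [dotProduct_add, dotProduct_smul, smul_eq_mul]
  ring

theorem abs_dotProduct_le_sqrt_mul_sqrt {ι : Type*} [Fintype ι] (a b : ι → ℝ) :
    |a ⬝ᵥ b| ≤ √(∑ i, a i ^ 2) * √(∑ i, b i ^ 2) := by
  refine abs_le.2 ⟨?_, Real.sum_mul_le_sqrt_mul_sqrt univ a b⟩
  have h := Real.sum_mul_le_sqrt_mul_sqrt univ a (-b)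
  simp only [Pi.neg_apply, mul_neg, sum_neg_distrib, neg_sq] at h
  exact neg_le.1 h

theorem mul_le_sub_of_mul_sq_add_sq_le {ρ D c δ N N' : ℝ} (hρ : 0 < ρ) (hD : 0 ≤ D)
    (hN' : 0 ≤ N') (hNN' : N * N' ≤ ρ) (hc : c ≤ N * D) (hδ : 0 ≤ δ)
    (h : ρ * D ^ 2 + c ^ 2 ≤ δ * c) : N' * D ≤ δ - c := by
  have hρD : 0 ≤ ρ * D ^ 2 := by positivity
  have hc₀ : 0 ≤ c := by nlinarith
  have he : 0 ≤ δ - c := by nlinarith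
  rcases hD.eq_or_lt with rfl | hD₀
  · simpa using he
  have h₁ : ρ * D ≤ N * (δ - c) := by
    refine le_of_mul_le_mul_left ?_ hD₀
    nlinarith [mul_le_mul_of_nonneg_right hc he]
  have h₂ : ρ * (N' * D) ≤ ρ * (δ - c) := by
    nlinarith [mul_le_mul_of_nonneg_left h₁ hN', mul_le_mul_of_nonneg_right hNN' he]
  exact le_of_mul_le_mul_left h₂ hρ

theorem dotp_eq_dotProduct {p : ℕ} (a b : Fin p → ℝ) : dotp a b = a ⬝ᵥ b := rfl

section ElasticNet

variable {n p : ℕ} (x : Fin n → Fin p → ℝ) (y : Fin n → ℝ) (xnew : Fin p → ℝ) {lam : ℝ} (ρ : ℝ)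

theorem enAug_convexCombination_le (hlam : 0 ≤ lam) (t : ℝ) {θ : ℝ} (h₀ : 0 ≤ θ) (h₁ : θ ≤ 1)
    (m β : Fin p → ℝ) :
    enAug x y xnew lam ρ t ((1 - θ) • m + θ • β)
      ≤ (1 - θ) * enAug x y xnew lam ρ t m + θ * enAug x y xnew lam ρ t β
        - θ * (1 - θ) * ((ρ / 2) * ∑ j, (β j - m j) ^ 2 + (1 / 2) * (xnew ⬝ᵥ (β - m)) ^ 2) := by
  have hdata : ∑ i, (y i - x i ⬝ᵥ ((1 - θ) • m + θ • β)) ^ 2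
      ≤ (1 - θ) * ∑ i, (y i - x i ⬝ᵥ m) ^ 2 + θ * ∑ i, (y i - x i ⬝ᵥ β) ^ 2 := by
    simp only [sub_dotProduct_convexCombination, sum_sq_convexCombination]
    have : 0 ≤ θ * (1 - θ) * ∑ i, ((y i - x i ⬝ᵥ β) - (y i - x i ⬝ᵥ m)) ^ 2 := by
      have := sub_nonneg.2 h₁
      positivity
    linarith
  have hlasso : ∑ j, |((1 - θ) • m + θ • β) j| ≤ (1 - θ) * ∑ j, |m j| + θ * ∑ j, |β j| := by
    rw [mul_sum, mul_sum, ← sum_add_distrib]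
    exact sum_le_sum fun j _ => abs_convexCombination_le h₀ h₁ (m j) (β j)
  have hridge : ∑ j, (((1 - θ) • m + θ • β) j) ^ 2
      = (1 - θ) * ∑ j, m j ^ 2 + θ * ∑ j, β j ^ 2 - θ * (1 - θ) * ∑ j, (β j - m j) ^ 2 :=
    sum_sq_convexCombination _ _ _ _
  have hnew : (t - xnew ⬝ᵥ ((1 - θ) • m + θ • β)) ^ 2 = (1 - θ) * (t - xnew ⬝ᵥ m) ^ 2
      + θ * (t - xnew ⬝ᵥ β) ^ 2 - θ * (1 - θ) * (xnew ⬝ᵥ (β - m)) ^ 2 := by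
    rw [sub_dotProduct_convexCombination, sq_convexCombination, dotProduct_sub]
    ring
  simp only [enAug, enObj, dotp_eq_dotProduct]
  rw [hridge, hnew]
  linarith [mul_le_mul_of_nonneg_left hlasso hlam]

theorem enAug_add_le_of_isMin (hlam : 0 ≤ lam) {t : ℝ} {m : Fin p → ℝ}
    (hm : ∀ γ, enAug x y xnew lam ρ t m ≤ enAug x y xnew lam ρ t γ) (β : Fin p → ℝ) :
    enAug x y xnew lam ρ t m + ((ρ / 2) * ∑ j, (β j - m j) ^ 2 + (1 / 2) * (xnew ⬝ᵥ (β - m)) ^ 2)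
      ≤ enAug x y xnew lam ρ t β :=
  add_le_of_isMin_of_le_convexCombination hm fun _ hθ =>
    enAug_convexCombination_le x y xnew ρ hlam t hθ.1.le hθ.2.le m β

theorem mul_sum_sq_add_sq_le_of_isMin (hlam : 0 ≤ lam) {s t : ℝ} {ms mt : Fin p → ℝ}
    (hs : ∀ γ, enAug x y xnew lam ρ s ms ≤ enAug x y xnew lam ρ s γ)
    (ht : ∀ γ, enAug x y xnew lam ρ t mt ≤ enAug x y xnew lam ρ t γ) :
    ρ * ∑ j, (mt j - ms j) ^ 2 + (xnew ⬝ᵥ (mt - ms)) ^ 2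
      ≤ (t - s) * xnew ⬝ᵥ (mt - ms) := by
  have hs' := enAug_add_le_of_isMin x y xnew ρ hlam hs mt
  have ht' := enAug_add_le_of_isMin x y xnew ρ hlam ht ms
  have hsymm : ∑ j, (ms j - mt j) ^ 2 = ∑ j, (mt j - ms j) ^ 2 :=
    sum_congr rfl fun j _ => by ring
  simp only [enAug, dotp_eq_dotProduct, dotProduct_sub, hsymm] at hs' ht' ⊢
  linarith

theorem abs_dotProduct_sub_le_of_isMin (hlam : 0 ≤ lam) (hρ : 0 < ρ) {a : Fin p → ℝ}
    (ha : √(∑ j, xnew j ^ 2) * √(∑ j, a j ^ 2) ≤ ρ) {s t : ℝ} (hst : s ≤ t)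
    {ms mt : Fin p → ℝ} (hs : ∀ γ, enAug x y xnew lam ρ s ms ≤ enAug x y xnew lam ρ s γ)
    (ht : ∀ γ, enAug x y xnew lam ρ t mt ≤ enAug x y xnew lam ρ t γ) :
    |a ⬝ᵥ (mt - ms)| ≤ (t - s) - xnew ⬝ᵥ (mt - ms) := by
  have hgrowth := mul_sum_sq_add_sq_le_of_isMin x y xnew ρ hlam hs ht
  have hsq : √(∑ j, (mt - ms) j ^ 2) ^ 2 = ∑ j, (mt j - ms j) ^ 2 :=
    Real.sq_sqrt (sum_nonneg fun _ _ => sq_nonneg _)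
  exact (abs_dotProduct_le_sqrt_mul_sqrt a (mt - ms)).trans
    (mul_le_sub_of_mul_sq_add_sq_le hρ (Real.sqrt_nonneg _) (Real.sqrt_nonneg _) ha
      ((le_abs_self _).trans (abs_dotProduct_le_sqrt_mul_sqrt xnew (mt - ms)))
      (sub_nonneg.2 hst) (by rw [hsq]; exact hgrowth))

end ElasticNet

theorem filter_abs_le_abs_subset_or {ι : Type*} [Fintype ι] {r : ι → ℝ → ℝ} {R : ℝ → ℝ}
    (hr : ∀ s t, s ≤ t → ∀ i, |r i t - r i s| ≤ R t - R s) {t₁ t t₂ : ℝ} (h₁ : t₁ ≤ t)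
    (h₂ : t ≤ t₂) :
    univ.filter (fun i => |r i t| ≤ |R t|) ⊆ univ.filter (fun i => |r i t₁| ≤ |R t₁|) ∨
      univ.filter (fun i => |r i t| ≤ |R t|) ⊆ univ.filter (fun i => |r i t₂| ≤ |R t₂|) := by
  simp only [subset_iff, mem_filter, mem_univ, true_and]
  rcases le_or_gt 0 (R t) with hR | hR
  · refine Or.inr fun i hi => ?_
    rw [abs_of_nonneg hR] at hi
    linarith [hr t t₂ h₂ i, abs_sub_abs_le_abs_sub (r i t₂) (r i t), le_abs_self (R t₂)]
  · refine Or.inl fun i hi => ?_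
    rw [abs_of_neg hR] at hi
    linarith [hr t₁ t h₁ i, abs_sub_abs_le_abs_sub (r i t₁) (r i t), abs_sub_comm (r i t₁) (r i t),
      neg_le_abs (R t₁)]

theorem pvalConf_le_of_subset {n p : ℕ} (x : Fin n → Fin p → ℝ) (y : Fin n → ℝ)
    (xnew : Fin p → ℝ) (βt : ℝ → Fin p → ℝ) {t t' : ℝ}
    (h : univ.filter (fun i => |y i - dotp (x i) (βt t')| ≤ |t' - dotp xnew (βt t')|) ⊆
      univ.filter (fun i => |y i - dotp (x i) (βt t)| ≤ |t - dotp xnew (βt t)|)) :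
    pvalConf x y xnew βt t ≤ pvalConf x y xnew βt t' := by
  unfold pvalConf
  gcongr

theorem elastic_net_conformal_set_interval_general {n p : ℕ} (x : Fin n → Fin p → ℝ)
    (y : Fin n → ℝ) (xnew : Fin p → ℝ) (lam ρ : ℝ) (hlam : 0 < lam) (hρ : 0 < ρ)
    (α : ℝ)
    (hρbig : ∀ i, Real.sqrt (∑ j, (xnew j) ^ 2) * Real.sqrt (∑ j, (x i j) ^ 2) ≤ ρ)
    (βt : ℝ → Fin p → ℝ)
    (hβt : ∀ t : ℝ, ∀ β, enAug x y xnew lam ρ t (βt t) ≤ enAug x y xnew lam ρ t β) :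
    {t : ℝ | α ≤ pvalConf x y xnew βt t}.OrdConnected := by
  have hresid : ∀ s t, s ≤ t → ∀ i,
      |(y i - dotp (x i) (βt t)) - (y i - dotp (x i) (βt s))|
        ≤ (t - dotp xnew (βt t)) - (s - dotp xnew (βt s)) := fun s t hst i => by
    have h := abs_dotProduct_sub_le_of_isMin x y xnew ρ hlam.le hρ (hρbig i) hst (hβt s) (hβt t)
    simp only [dotp_eq_dotProduct, dotProduct_sub] at h ⊢
    rw [sub_sub_sub_cancel_left, abs_sub_comm]
    linarith
  refine ⟨fun t₁ h₁ t₂ h₂ t ht => ?_⟩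
  rcases filter_abs_le_abs_subset_or (r := fun i u => y i - dotp (x i) (βt u))
    (R := fun u => u - dotp xnew (βt u)) hresid ht.1 ht.2 with h | h
  · exact le_trans h₁ (pvalConf_le_of_subset x y xnew βt h)
  · exact le_trans h₂ (pvalConf_le_of_subset x y xnew βt h)

/-- Corollary 2 of the paper: if the ridge parameter satisfies
`ρ ≥ ‖x_{n+1}‖₂ · max_{1≤i≤n} ‖x_i‖₂` (with `ρ > 0`), then the elastic net conformal
prediction set at `x_{n+1}`, i.e. `{y : p̂_y ≥ α}`, is an interval (order-connected set). -/
theorem elastic_net_conformal_set_interval {n p : ℕ} (x : Fin n → Fin p → ℝ)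
    (y : Fin n → ℝ) (xnew : Fin p → ℝ) (lam ρ : ℝ) (hlam : 0 < lam) (hρ : 0 < ρ)
    (α : ℝ) (hα : α ∈ Set.Ioo (0 : ℝ) 1)
    (hρbig : ∀ i, Real.sqrt (∑ j, (xnew j) ^ 2) * Real.sqrt (∑ j, (x i j) ^ 2) ≤ ρ)
    (βt : ℝ → Fin p → ℝ)
    (hβt : ∀ t : ℝ, ∀ β, enAug x y xnew lam ρ t (βt t) ≤ enAug x y xnew lam ρ t β) :
    {t : ℝ | α ≤ pvalConf x y xnew βt t}.OrdConnected :=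
  elastic_net_conformal_set_interval_general x y xnew lam ρ hlam hρ α hρbig βt hβt
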